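/- arXiv:1901.00996 — 3 statements merged into one kernel-verified Lean document; each statement's English description precedes it below -/
import Mathlib

section
/- Let K be a commutative associative unital ring with the identity involution and let a, b, c be invertible elements of K. Let R = (((K,a),b),c) be the ring obtained by applying the Cayley–Dickson process three times, where at each step the involution is the one induced by (x,y)* = (x*,−y). Then R is non-associative and centrally essential if and only if the ideal Ann_K(2) = {x ∈ K : 2x = 0} is an essential ideal of K and Ann_K(2) ≠ K. -/
set_option linter.unusedSectionVars false

/-- The associator `(a,b,c) = (ab)c - a(bc)` in a not necessarily associative ring. -/
def naAssociator {R : Type*} [NonAssocRing R] (a b c : R) : R := a * b * c - a * (b * c)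

/-- The commutator `[a,b] = ab - ba` in a not necessarily associative ring. -/
def naCommutator {R : Type*} [NonAssocRing R] (a b : R) : R := a * b - b * a

/-- The associative center `N(R)`. -/
def assocCenter (R : Type*) [NonAssocRing R] : Set R :=
  {x | ∀ a b : R, naAssociator x a b = 0 ∧ naAssociator a x b = 0 ∧ naAssociator a b x = 0}

/-- The commutative center `K(R)`. -/
def commCenter (R : Type*) [NonAssocRing R] : Set R :=
  {x | ∀ a : R, naCommutator x a = 0}

/-- The center `Z(R) = N(R) ∩ K(R)`. -/
def ringCenter (R : Type*) [NonAssocRing R] : Set R :=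
  assocCenter R ∩ commCenter R

/-- A ring is centrally essential if for every nonzero `r` there is a central `z`
with `z * r ≠ 0` central. -/
def IsCentrallyEssential (R : Type*) [NonAssocRing R] : Prop :=
  ∀ r : R, r ≠ 0 → ∃ z ∈ ringCenter R, z * r ≠ 0 ∧ z * r ∈ ringCenter R

/-- A ring is left `N`-essential. -/
def IsLeftNEssential (R : Type*) [NonAssocRing R] : Prop :=
  ∀ r : R, r ≠ 0 → ∃ n ∈ assocCenter R, n * r ≠ 0 ∧ n * r ∈ assocCenter R

/-- A ring is right `N`-essential. -/
def IsRightNEssential (R : Type*) [NonAssocRing R] : Prop :=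
  ∀ r : R, r ≠ 0 → ∃ n ∈ assocCenter R, r * n ≠ 0 ∧ r * n ∈ assocCenter R

/-- `I` is an essential ideal of `B` (elementwise formulation). -/
def EssentialIn {R : Type*} [NonAssocRing R] (I B : Set R) : Prop :=
  ∀ b ∈ B, b ≠ 0 → ∃ d ∈ B, d * b ≠ 0 ∧ d * b ∈ I

/-- The Cayley–Dickson ring `(A, α)`: the abelian group `A ⊕ A` with multiplication
`(a₁,a₂)(a₃,a₄) = (a₁a₃ + α(a₄a₂*), a₁*a₄ + a₃a₂)`. -/
@[ext]
structure CD (A : Type*) (α : A) : Type _ where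
  re : A
  im : A

namespace CD

variable {A : Type*} [NonAssocRing A] [StarRing A] {α : A}

instance : Zero (CD A α) := ⟨⟨0, 0⟩⟩
instance : Add (CD A α) := ⟨fun z w => ⟨z.re + w.re, z.im + w.im⟩⟩
instance : Neg (CD A α) := ⟨fun z => ⟨-z.re, -z.im⟩⟩
instance : One (CD A α) := ⟨⟨1, 0⟩⟩
instance : Mul (CD A α) :=
  ⟨fun z w => ⟨z.re * w.re + α * (w.im * star z.im), star z.re * w.im + w.re * z.im⟩⟩
instance : Star (CD A α) := ⟨fun z => ⟨star z.re, -z.im⟩⟩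

@[simp] theorem zero_re : (0 : CD A α).re = 0 := rfl
@[simp] theorem zero_im : (0 : CD A α).im = 0 := rfl
@[simp] theorem one_re : (1 : CD A α).re = 1 := rfl
@[simp] theorem one_im : (1 : CD A α).im = 0 := rfl
@[simp] theorem add_re (z w : CD A α) : (z + w).re = z.re + w.re := rfl
@[simp] theorem add_im (z w : CD A α) : (z + w).im = z.im + w.im := rfl
@[simp] theorem neg_re (z : CD A α) : (-z).re = -z.re := rfl
@[simp] theorem neg_im (z : CD A α) : (-z).im = -z.im := rfl
@[simp] theorem mul_re (z w : CD A α) :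
    (z * w).re = z.re * w.re + α * (w.im * star z.im) := rfl
@[simp] theorem mul_im (z w : CD A α) :
    (z * w).im = star z.re * w.im + w.re * z.im := rfl
@[simp] theorem star_re (z : CD A α) : (star z).re = star z.re := rfl
@[simp] theorem star_im (z : CD A α) : (star z).im = -z.im := rfl
@[simp] theorem mk_re (x y : A) : (⟨x, y⟩ : CD A α).re = x := rfl
@[simp] theorem mk_im (x y : A) : (⟨x, y⟩ : CD A α).im = y := rfl

instance : NonAssocRing (CD A α) where
  add_assoc a b c := by ext <;> simp [add_assoc]
  zero_add a := by ext <;> simp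
  add_zero a := by ext <;> simp
  add_comm a b := by ext <;> simp [add_comm]
  neg_add_cancel a := by ext <;> simp
  nsmul := nsmulRec
  zsmul := zsmulRec
  left_distrib a b c := by ext <;> simp [mul_add, add_mul] <;> abel
  right_distrib a b c := by ext <;> simp [mul_add, add_mul, star_add] <;> abel
  zero_mul a := by ext <;> simp
  mul_zero a := by ext <;> simp
  one_mul a := by ext <;> simp
  mul_one a := by ext <;> simp

instance {A : Type*} {α : A} [Finite A] : Finite (CD A α) :=
  Finite.of_injective (fun z : CD A α => (z.re, z.im))
    (fun z w h => by cases z; cases w; simpa using h)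

/-- If `α` commutes with every element and `star α = α`, then `(a,b) ↦ (a*, -b)`
makes `(A, α)` a star ring. -/
def starRing (h : ∀ t : A, α * t = t * α) (hs : star α = α) : StarRing (CD A α) where
  star := star
  star_involutive z := by ext <;> simp
  star_mul z w := by
    ext <;>
      simp [StarMul.star_mul, star_star, StarAddMonoid.star_add, star_neg, hs, h, mul_neg, neg_mul,
        neg_add] <;>
      abel
  star_add z w := by ext <;> simp [StarAddMonoid.star_add, neg_add] <;> abel

/-- An element of the form `(x, 0)` with `x` commuting with everything and `star x = x`
commutes with every element of `(A, α)`. -/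
theorem mk_zero_comm {x : A} (hx : ∀ t : A, x * t = t * x) (hsx : star x = x) (z : CD A α) :
    (⟨x, 0⟩ : CD A α) * z = z * ⟨x, 0⟩ := by
  ext <;> simp [hsx, hx]

end CD

/-!
Over `K / 2K` the involutions become trivial (`-1 = 1`), and the triple Cayley–Dickson ring
there is commutative and associative. Hence every associator and every commutator of
`R = (((K,a),b),c)` has all its coordinates in `2K`, so a scalar `m` with `2m = 0` annihilates
them and `m x` is central for every `x`. Conversely, commuting with two basis units forces the
seven non-scalar coordinates of a central element into `Ann_K(2)` (here `a` must be a unit).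
So `Z(R) = K ⊕ Ann_K(2)⁷`, which turns central essentiality of `R` into essentiality of
`Ann_K(2)`. Finally `R` is associative exactly when `2 = 0`, i.e. when `Ann_K(2) = K`: one
associator of basis units is `2bc` times a basis unit.
-/

section NonAssocRing

variable {R : Type*} [NonAssocRing R]

theorem ringCenter_eq_center : ringCenter R = Set.center R := by
  ext z
  simp only [ringCenter, assocCenter, commCenter, naAssociator, naCommutator, Set.mem_inter_iff,
    sub_eq_zero, Set.mem_center_iff, isMulCentral_iff, commute_iff_eq]
  refine ⟨fun ⟨h, hc⟩ => ⟨hc, fun b c => (h b c).1.symm, fun a b => (h a b).2.2⟩,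
    fun ⟨hc, hl, hr⟩ => ⟨fun a b => ⟨(hl a b).symm, ?_, hr a b⟩, hc⟩⟩
  exact IsMulCentral.mid_assoc ⟨fun a => hc a, hl, hr⟩ a b

theorem mul_mem_center_of_mul_naAssociator_eq_zero {s : R} (hs : s ∈ Set.center R)
    (hassoc : ∀ x y z, s * naAssociator x y z = 0) (hcomm : ∀ x y, s * naCommutator x y = 0)
    (x : R) : s * x ∈ Set.center R := by
  rw [Set.mem_center_iff] at hs ⊢
  simp only [naAssociator, naCommutator, mul_sub, sub_eq_zero] at hassoc hcomm
  refine ⟨fun y => ?_, fun b c => ?_, fun a b => ?_⟩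
  · rw [commute_iff_eq, ← hs.left_assoc, hcomm, ← hs.left_comm]
  · rw [← hs.left_assoc, ← hs.left_assoc, ← hs.left_assoc, hassoc]
  · rw [← hs.left_comm, ← hs.left_comm, ← hs.left_comm, hassoc]

theorem two_mul_eq_zero_iff_eq_neg {t : R} : 2 * t = 0 ↔ t = -t := by
  rw [two_mul, eq_neg_iff_add_eq_zero]

theorem neg_eq_self_of_two_eq_zero (h2 : (2 : R) = 0) (t : R) : -t = t :=
  (two_mul_eq_zero_iff_eq_neg.1 (by rw [h2, zero_mul])).symm

end NonAssocRing

theorem Ideal.exists_mul_ne_zero_forall_mul_mem {R ι : Type*} [CommRing R] {I : Ideal R}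
    (hI : ∀ x : R, x ≠ 0 → ∃ y, y * x ≠ 0 ∧ y * x ∈ I) (s : Finset ι) {v : ι → R}
    (hv : ∃ j ∈ s, v j ≠ 0) : ∃ u, (∃ j ∈ s, u * v j ≠ 0) ∧ ∀ j ∈ s, u * v j ∈ I := by
  classical
  induction s using Finset.induction_on with
  | empty => simp at hv
  | insert i s _ ih =>
    simp only [Finset.exists_mem_insert, Finset.forall_mem_insert]
    by_cases hs : ∃ j ∈ s, v j ≠ 0
    · obtain ⟨u, hu, huI⟩ := ih hs
      by_cases hui : u * v i ∈ I
      · exact ⟨u, Or.inr hu, hui, huI⟩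
      · obtain ⟨y, hy, hyI⟩ := hI (u * v i) fun h0 => hui (h0 ▸ I.zero_mem)
        refine ⟨y * u, Or.inl (by rwa [mul_assoc]), by rwa [mul_assoc], fun j hj => ?_⟩
        rw [mul_assoc]
        exact I.mul_mem_left y (huI j hj)
    · push Not at hs
      have hvi : v i ≠ 0 := by
        obtain ⟨j, hj, hvj⟩ := hv
        rcases Finset.mem_insert.1 hj with rfl | hj
        · exact hvj
        · exact absurd (hs j hj) hvj
      obtain ⟨y, hy, hyI⟩ := hI _ hvi
      exact ⟨y, Or.inl hy, hyI, fun j hj => by rw [hs j hj, mul_zero]; exact I.zero_mem⟩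

section

variable {K : Type*} [CommRing K] [StarRing K] [TrivialStar K]

-- Lets `simp` see `CD`'s own `Star` instance through the two instances below.
attribute [reducible] CD.starRing

instance (a : K) : StarRing (CD K a) := CD.starRing (fun t => mul_comm a t) (star_trivial a)

instance (a b : K) : StarRing (CD (CD K a) ⟨b, 0⟩) :=
  CD.starRing (CD.mk_zero_comm (fun t => mul_comm b t) (star_trivial b)) (by ext <;> simp)

variable (K) in
abbrev Octonion (a b c : K) : Type _ := CD (CD (CD K a) ⟨b, 0⟩) ⟨⟨c, 0⟩, 0⟩

namespace Octonion

variable {a b c : K}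

def coords (x : Octonion K a b c) : Fin 8 → K :=
  ![x.re.re.re, x.re.re.im, x.re.im.re, x.re.im.im, x.im.re.re, x.im.re.im, x.im.im.re, x.im.im.im]

def ofCoords (v : Fin 8 → K) : Octonion K a b c :=
  ⟨⟨⟨v 0, v 1⟩, ⟨v 2, v 3⟩⟩, ⟨⟨v 4, v 5⟩, ⟨v 6, v 7⟩⟩⟩

def scalar (k : K) : Octonion K a b c := ⟨⟨⟨k, 0⟩, 0⟩, 0⟩

def basis (i : Fin 8) : Octonion K a b c := ofCoords (Pi.single i 1)

@[simp] theorem coords_ofCoords (v : Fin 8 → K) : coords (ofCoords v : Octonion K a b c) = v := by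
  ext i; fin_cases i <;> rfl

theorem ofCoords_coords (x : Octonion K a b c) : ofCoords (coords x) = x := rfl

theorem coords_injective : Function.Injective (coords : Octonion K a b c → Fin 8 → K) :=
  Function.LeftInverse.injective ofCoords_coords

theorem ofCoords_surjective : Function.Surjective (ofCoords : (Fin 8 → K) → Octonion K a b c) :=
  fun x => ⟨coords x, rfl⟩

@[simp] theorem coords_zero : coords (0 : Octonion K a b c) = 0 := by
  ext i; fin_cases i <;> rfl

theorem coords_scalar_mul (k : K) (x : Octonion K a b c) (i : Fin 8) :
    coords (scalar k * x) i = k * coords x i := by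
  obtain ⟨v, rfl⟩ := ofCoords_surjective x
  fin_cases i <;> simp [scalar, ofCoords, coords]

set_option maxHeartbeats 400000 in
theorem scalar_mem_center (k : K) : (scalar k : Octonion K a b c) ∈ Set.center _ := by
  rw [Set.mem_center_iff]
  refine ⟨fun x => ?_, fun x y => ?_, fun x y => ?_⟩
  · obtain ⟨u, rfl⟩ := ofCoords_surjective x
    rw [commute_iff_eq]
    ext <;> simp only [scalar, ofCoords, CD.mul_re, CD.mul_im, CD.add_re, CD.add_im, CD.neg_re,
      CD.neg_im, CD.star_re, CD.star_im, CD.zero_re, CD.zero_im, star_trivial] <;> ring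
  all_goals
    obtain ⟨u, rfl⟩ := ofCoords_surjective x
    obtain ⟨v, rfl⟩ := ofCoords_surjective y
    ext <;> simp only [scalar, ofCoords, CD.mul_re, CD.mul_im, CD.add_re, CD.add_im, CD.neg_re,
      CD.neg_im, CD.star_re, CD.star_im, CD.zero_re, CD.zero_im, star_trivial] <;> ring

theorem mul_comm_of_two_eq_zero (h2 : (2 : K) = 0) (x y : Octonion K a b c) : x * y = y * x := by
  obtain ⟨u, rfl⟩ := ofCoords_surjective x
  obtain ⟨v, rfl⟩ := ofCoords_surjective y
  ext <;> simp only [ofCoords, neg_eq_self_of_two_eq_zero h2, CD.mul_re, CD.mul_im, CD.add_re,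
    CD.add_im, CD.neg_re, CD.neg_im, CD.star_re, CD.star_im, CD.zero_re, CD.zero_im,
    star_trivial] <;> ring

theorem mul_assoc_of_two_eq_zero (h2 : (2 : K) = 0) (x y z : Octonion K a b c) :
    x * y * z = x * (y * z) := by
  obtain ⟨u, rfl⟩ := ofCoords_surjective x
  obtain ⟨v, rfl⟩ := ofCoords_surjective y
  obtain ⟨w, rfl⟩ := ofCoords_surjective z
  ext <;> simp only [ofCoords, neg_eq_self_of_two_eq_zero h2, CD.mul_re, CD.mul_im, CD.add_re,
    CD.add_im, CD.neg_re, CD.neg_im, CD.star_re, CD.star_im, CD.zero_re, CD.zero_im,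
    star_trivial] <;> ring

theorem not_forall_mul_assoc_iff (hb : IsUnit b) (hc : IsUnit c) :
    (¬ ∀ x y z : Octonion K a b c, x * y * z = x * (y * z)) ↔ (2 : K) ≠ 0 := by
  refine ⟨fun h h2 => h (mul_assoc_of_two_eq_zero h2), fun h2 hassoc => h2 ?_⟩
  have h5 : -(b * c) = c * b := by
    simpa [basis, ofCoords, Pi.single_apply] using
      congrArg (fun w : Octonion K a b c => w.im.re.im) (hassoc (basis 4) (basis 6) (basis 7))
  exact (hb.mul hc).mul_right_eq_zero.1 (by linear_combination -h5)

theorem two_mul_coords_eq_zero_of_mem_center (ha : IsUnit a) {z : Octonion K a b c}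
    (hz : z ∈ Set.center _) (i : Fin 8) (hi : i ≠ 0) : 2 * coords z i = 0 := by
  obtain ⟨v, rfl⟩ := ofCoords_surjective z
  have h1 := ((Set.mem_center_iff.1 hz).comm (basis 1)).eq
  have h2 := ((Set.mem_center_iff.1 hz).comm (basis 2)).eq
  simp only [CD.ext_iff, basis, ofCoords, CD.mul_re, CD.mul_im, CD.add_re, CD.add_im, CD.neg_re,
    CD.neg_im, CD.star_re, CD.star_im, CD.zero_re, CD.zero_im, star_trivial, Pi.single_apply,
    Fin.isValue, zero_ne_one, ↓reduceIte, Fin.reduceEq, mul_zero, zero_mul, mul_one, one_mul,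
    add_zero, zero_add, mul_neg, neg_mul, neg_zero, neg_neg, and_self, true_and] at h1 h2
  have hunit {t : K} (h : a * t = -(a * t)) : 2 * t = 0 :=
    ha.mul_right_eq_zero.1 (by rw [mul_left_comm, two_mul_eq_zero_iff_eq_neg]; exact h)
  fin_cases i
  · exact absurd rfl hi
  · exact two_mul_eq_zero_iff_eq_neg.2 (neg_eq_iff_eq_neg.1 h2.1.2)
  · exact two_mul_eq_zero_iff_eq_neg.2 h1.1.2
  · exact hunit h1.1.1
  · exact two_mul_eq_zero_iff_eq_neg.2 h1.2.1.2
  · exact hunit h1.2.1.1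
  · exact two_mul_eq_zero_iff_eq_neg.2 (neg_eq_iff_eq_neg.1 h1.2.2.2)
  · exact hunit (neg_eq_iff_eq_neg.1 h1.2.2.1)

section Map

variable {L : Type*} [CommRing L] [StarRing L] [TrivialStar L]

def map (f : K →+* L) (x : Octonion K a b c) : Octonion L (f a) (f b) (f c) :=
  ⟨⟨⟨f x.re.re.re, f x.re.re.im⟩, ⟨f x.re.im.re, f x.re.im.im⟩⟩,
    ⟨⟨f x.im.re.re, f x.im.re.im⟩, ⟨f x.im.im.re, f x.im.im.im⟩⟩⟩

theorem coords_map (f : K →+* L) (x : Octonion K a b c) (i : Fin 8) :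
    coords (map f x) i = f (coords x i) := by
  fin_cases i <;> rfl

theorem map_mul (f : K →+* L) (x y : Octonion K a b c) : map f (x * y) = map f x * map f y := by
  ext <;> simp only [map, CD.mul_re, CD.mul_im, CD.add_re, CD.add_im, CD.neg_re, CD.neg_im,
    CD.star_re, CD.star_im, CD.zero_re, CD.zero_im, star_trivial, map_add, _root_.map_mul, map_neg,
    map_zero]

theorem map_sub (f : K →+* L) (x y : Octonion K a b c) : map f (x - y) = map f x - map f y := by
  ext <;> simp only [map, sub_eq_add_neg, CD.add_re, CD.add_im, CD.neg_re, CD.neg_im, map_add,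
    map_neg]

end Map

section QuotientTwo

local instance : StarRing (K ⧸ Ideal.span {(2 : K)}) := starRingOfComm

local instance : TrivialStar (K ⧸ Ideal.span {(2 : K)}) := ⟨fun _ => rfl⟩

theorem two_eq_zero_quotient : (2 : K ⧸ Ideal.span {(2 : K)}) = 0 := by
  rw [← map_ofNat (Ideal.Quotient.mk _) 2, Ideal.Quotient.eq_zero_iff_mem]
  exact Ideal.mem_span_singleton_self 2

theorem two_dvd_coords_of_map_eq_zero {w : Octonion K a b c}
    (hw : map (Ideal.Quotient.mk (Ideal.span {(2 : K)})) w = 0) (i : Fin 8) : 2 ∣ coords w i := by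
  rw [← Ideal.mem_span_singleton, ← Ideal.Quotient.eq_zero_iff_mem, ← coords_map, hw, coords_zero,
    Pi.zero_apply]

theorem two_dvd_coords_naAssociator (x y z : Octonion K a b c) :
    ∀ i, 2 ∣ coords (naAssociator x y z) i :=
  two_dvd_coords_of_map_eq_zero <| by
    rw [naAssociator, map_sub, map_mul, map_mul, map_mul, map_mul,
      mul_assoc_of_two_eq_zero two_eq_zero_quotient, sub_self]

theorem two_dvd_coords_naCommutator (x y : Octonion K a b c) :
    ∀ i, 2 ∣ coords (naCommutator x y) i :=
  two_dvd_coords_of_map_eq_zero <| by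
    rw [naCommutator, map_sub, map_mul, map_mul, mul_comm_of_two_eq_zero two_eq_zero_quotient,
      sub_self]

end QuotientTwo

theorem scalar_mul_eq_zero_of_two_dvd {m : K} (hm : 2 * m = 0) {w : Octonion K a b c}
    (hw : ∀ i, 2 ∣ coords w i) : scalar m * w = 0 := by
  refine coords_injective (funext fun i => ?_)
  obtain ⟨t, ht⟩ := hw i
  rw [coords_scalar_mul, ht, coords_zero, Pi.zero_apply, ← mul_assoc, mul_comm m, hm, zero_mul]

theorem scalar_mul_mem_center {m : K} (hm : 2 * m = 0) (x : Octonion K a b c) :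
    scalar m * x ∈ Set.center _ :=
  mul_mem_center_of_mul_naAssociator_eq_zero (scalar_mem_center m)
    (fun x y z => scalar_mul_eq_zero_of_two_dvd hm (two_dvd_coords_naAssociator x y z))
    (fun x y => scalar_mul_eq_zero_of_two_dvd hm (two_dvd_coords_naCommutator x y)) x

theorem sum_scalar_mul_basis (x : Octonion K a b c) : ∑ i, scalar (coords x i) * basis i = x := by
  obtain ⟨v, rfl⟩ := ofCoords_surjective x
  rw [coords_ofCoords]
  ext <;> simp [Fin.sum_univ_eight, scalar, basis, ofCoords]

theorem mem_center_of_two_mul_coords_eq_zero {x : Octonion K a b c}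
    (hx : ∀ i ≠ 0, 2 * coords x i = 0) : x ∈ Set.center _ := by
  rw [← sum_scalar_mul_basis x]
  refine Finset.sum_induction _ (· ∈ Set.center _) (fun _ _ => Set.add_mem_center)
    Set.zero_mem_center fun i _ => ?_
  by_cases hi : i = 0
  · subst hi
    rw [show (basis 0 : Octonion K a b c) = 1 from rfl, mul_one]
    exact scalar_mem_center _
  · exact scalar_mul_mem_center (hx i hi) _

theorem mul_ofCoords_single_seven_eq_zero {z : Octonion K a b c} {t : K}
    (h : ∀ i, coords z i * t = 0) : z * ofCoords (Pi.single 7 t) = 0 := by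
  obtain ⟨v, rfl⟩ := ofCoords_surjective z
  simp only [coords_ofCoords] at h
  ext <;> simp [ofCoords, h, mul_comm t]

theorem coords_mul_ofCoords_single_seven (z : Octonion K a b c) (t : K) :
    coords (z * ofCoords (Pi.single 7 t)) 7 = coords z 0 * t := by
  obtain ⟨v, rfl⟩ := ofCoords_surjective z
  simp [coords, ofCoords]

theorem exists_two_mul_eq_zero_of_isCentrallyEssential (ha : IsUnit a)
    (h : IsCentrallyEssential (Octonion K a b c)) (x : K) (hx : x ≠ 0) :
    ∃ y : K, y * x ≠ 0 ∧ 2 * (y * x) = 0 := by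
  have hr : (ofCoords (Pi.single 7 x) : Octonion K a b c) ≠ 0 := fun h0 => hx <| by
    simpa using congrArg (coords · 7) h0
  obtain ⟨z, hz, hzr, hzrc⟩ := h _ hr
  rw [ringCenter_eq_center] at hz hzrc
  -- Multiplying by the seventh basis unit moves the scalar coordinate of `z` to a non-scalar one.
  have htor (i : Fin 8) : 2 * (coords z i * x) = 0 := by
    by_cases hi : i = 0
    · subst hi
      rw [← coords_mul_ofCoords_single_seven]
      exact two_mul_coords_eq_zero_of_mem_center ha hzrc 7 (by decide)
    · rw [← mul_assoc, two_mul_coords_eq_zero_of_mem_center ha hz i hi, zero_mul]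
  by_contra! hall
  exact hzr (mul_ofCoords_single_seven_eq_zero fun i => not_not.1 fun hi => hall _ hi (htor i))

theorem isCentrallyEssential_of_two_mul_eq_zero
    (h : ∀ x : K, x ≠ 0 → ∃ y : K, y * x ≠ 0 ∧ 2 * (y * x) = 0) :
    IsCentrallyEssential (Octonion K a b c) := by
  intro r hr
  rw [ringCenter_eq_center]
  obtain ⟨u, ⟨j, -, hj⟩, hu⟩ :=
    Ideal.exists_mul_ne_zero_forall_mul_mem (I := LinearMap.ker (LinearMap.mulLeft K (2 : K)))
      (by simpa using h) Finset.univ (v := coords r) <| by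
        by_contra! h0
        exact hr (coords_injective (funext fun i => by simpa using h0 i))
  refine ⟨scalar u, scalar_mem_center u, fun h0 => hj ?_, mem_center_of_two_mul_coords_eq_zero ?_⟩
  · rw [← coords_scalar_mul, h0, coords_zero, Pi.zero_apply]
  · intro i _
    simpa [coords_scalar_mul] using hu i (Finset.mem_univ i)

theorem isCentrallyEssential_iff (ha : IsUnit a) :
    IsCentrallyEssential (Octonion K a b c) ↔
      ∀ x : K, x ≠ 0 → ∃ y : K, y * x ≠ 0 ∧ 2 * (y * x) = 0 :=
  ⟨exists_two_mul_eq_zero_of_isCentrallyEssential ha, isCentrallyEssential_of_two_mul_eq_zero⟩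

end Octonion

end

-- Matching the products `x * y * z` against the statement's own instance terms is expensive.
set_option maxHeartbeats 1000000 in
theorem stmt15 {K : Type*} [CommRing K] [StarRing K] [TrivialStar K]
    {a b c : K} (ha : IsUnit a) (hb : IsUnit b) (hc : IsUnit c) :
    letI : StarRing (CD K a) := CD.starRing (fun t => mul_comm a t) (star_trivial a)
    letI : StarRing (CD (CD K a) ⟨b, 0⟩) :=
      CD.starRing (CD.mk_zero_comm (fun t => mul_comm b t) (star_trivial b))
        (by ext <;> first | exact star_trivial b | exact neg_zero)
    ((¬ ∀ x y z : CD (CD (CD K a) ⟨b, 0⟩) ⟨⟨c, 0⟩, 0⟩, x * y * z = x * (y * z)) ∧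
        IsCentrallyEssential (CD (CD (CD K a) ⟨b, 0⟩) ⟨⟨c, 0⟩, 0⟩)) ↔
      ((∀ x : K, x ≠ 0 → ∃ y : K, y * x ≠ 0 ∧ 2 * (y * x) = 0) ∧
        {x : K | 2 * x = 0} ≠ Set.univ) := by
  have h2 : (2 : K) ≠ 0 ↔ {x : K | 2 * x = 0} ≠ Set.univ := by
    rw [ne_eq, ne_eq, Set.eq_univ_iff_forall, not_iff_not]
    exact ⟨fun h x => by simp [h], fun h => by simpa using h 1⟩
  exact (and_congr ((Octonion.not_forall_mul_assoc_iff hb hc).trans h2)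
    (Octonion.isCentrallyEssential_iff ha)).trans and_comm
end

section
/- Let K = ℤ/4ℤ with the identity involution, and let R = (((K,1),1),1) be the ring obtained by applying the Cayley–Dickson process three times with α = 1 at each step, where at each step the involution is the one induced by (x,y)* = (x*,−y). Then R is a finite ring that is centrally essential, non-commutative, and non-associative. -/
set_option linter.unusedSectionVars false

section Aux

lemma dbl_congr {M : Type*} [AddCommGroup M] {a b c d : M} (h1 : a + a = c + c)
    (h2 : b + b = d + d) : (a + b) + (a + b) = (c + d) + (c + d) := by
  have e1 : (a + b) + (a + b) = (a + a) + (b + b) := by abel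
  rw [e1, h1, h2]; abel

lemma dbl_congr4 {M : Type*} [AddCommGroup M] {a1 a2 a3 a4 b1 b2 b3 b4 : M}
    (h1 : a1 + a1 = b1 + b1) (h2 : a2 + a2 = b2 + b2) (h3 : a3 + a3 = b3 + b3)
    (h4 : a4 + a4 = b4 + b4) :
    (a1 + a2 + (a3 + a4)) + (a1 + a2 + (a3 + a4))
      = (b1 + b2 + (b3 + b4)) + (b1 + b2 + (b3 + b4)) := by
  have e1 : (a1 + a2 + (a3 + a4)) + (a1 + a2 + (a3 + a4))
      = ((a1+a1) + (a2+a2)) + ((a3+a3) + (a4+a4)) := by abel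
  rw [e1, h1, h2, h3, h4]; abel

lemma dmul_left {A : Type*} [NonAssocRing A] (c : A) {a b : A} (h : a + a = b + b) :
    c * a + c * a = c * b + c * b := by rw [← mul_add, h, mul_add]

lemma dmul_right {A : Type*} [NonAssocRing A] (c : A) {a b : A} (h : a + a = b + b) :
    a * c + a * c = b * c + b * c := by rw [← add_mul, h, add_mul]

structure CEGood (A : Type*) [NonAssocRing A] [StarRing A] : Prop where
  four : ∀ x : A, (x + x) + (x + x) = 0
  st : ∀ x : A, star x + star x = x + x
  comm : ∀ x y : A, x * y + x * y = y * x + y * x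
  assoc : ∀ x y z : A, x * y * z + x * y * z = x * (y * z) + x * (y * z)
  half : ∀ x : A, x + x = 0 → ∃ s : A, s + s = x

namespace CEGood

variable {A : Type*} [NonAssocRing A] [StarRing A]

lemma dstar_mul (g : CEGood A) (a b : A) :
    a * star b + a * star b = b * star a + b * star a :=
  ((dmul_left a (g.st b)).trans (g.comm a b)).trans (dmul_left b (g.st a)).symm

theorem cd (g : CEGood A) :
    @CEGood (CD A 1) _ (CD.starRing (fun t => by rw [one_mul, mul_one]) (star_one A)) := by
  letI : StarRing (CD A 1) := CD.starRing (fun t => by rw [one_mul, mul_one]) (star_one A)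
  constructor
  · intro x
    ext
    · exact g.four x.re
    · exact g.four x.im
  · intro x
    ext
    · exact g.st x.re
    · show -x.im + -x.im = x.im + x.im
      have h := g.four x.im
      have e : -x.im + -x.im - (x.im + x.im) = -((x.im + x.im) + (x.im + x.im)) := by abel
      rw [h, neg_zero] at e
      exact sub_eq_zero.mp e
  · intro x y
    ext <;> simp [mul_add, add_mul, star_mul, star_add, star_star]
    · exact dbl_congr (g.comm x.re y.re) (g.dstar_mul y.im x.im)
    · refine (dbl_congr (dmul_right y.im (g.st x.re))
        (dmul_right x.im (g.st y.re)).symm).trans ?_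
      abel
  · intro x y z
    ext <;> simp [mul_add, add_mul, star_mul, star_add, star_star]
    · refine (dbl_congr4 (g.assoc x.re y.re z.re)
        ((g.comm (y.im * star x.im) z.re).trans (g.assoc z.re y.im (star x.im)).symm)
        ((g.assoc z.im (star y.im) x.re).symm.trans (g.comm (z.im * star y.im) x.re))
        (((g.assoc z.im (star x.im) (star y.re)).symm.trans
          (g.comm (z.im * star x.im) (star y.re))).trans
            (g.assoc (star y.re) z.im (star x.im)).symm)).trans ?_
      abel
    · refine (dbl_congr4
        ((dmul_right z.im (g.comm (star y.re) (star x.re))).trans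
          (g.assoc (star x.re) (star y.re) z.im))
        (((((((g.assoc x.im (star y.im) z.im).trans
            (dmul_left x.im (g.comm (star y.im) z.im))).trans
          (g.assoc x.im z.im (star y.im)).symm).trans
            (dmul_right (star y.im) (g.comm x.im z.im))).trans
          (g.assoc z.im x.im (star y.im))).trans
            (dmul_left z.im (g.comm x.im (star y.im)))).trans
          (g.assoc z.im (star y.im) x.im).symm)
        ((g.assoc z.re (star x.re) y.im).symm.trans
          ((dmul_right y.im (g.comm z.re (star x.re))).trans
            (g.assoc (star x.re) z.re y.im)))
        ((g.assoc z.re y.re x.im).symm.trans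
          (dmul_right x.im (g.comm z.re y.re)))).trans ?_
      abel
  · intro x hx
    have hre : x.re + x.re = 0 := congrArg CD.re hx
    have him : x.im + x.im = 0 := congrArg CD.im hx
    obtain ⟨s, hs⟩ := g.half x.re hre
    obtain ⟨t, ht⟩ := g.half x.im him
    exact ⟨⟨s, t⟩, by ext <;> simp [hs, ht]⟩

end CEGood
end Aux
set_option maxHeartbeats 1000000 in
lemma zmod4Good : @CEGood (ZMod 4) _ starRingOfComm := by
  letI : StarRing (ZMod 4) := starRingOfComm
  constructor
  · decide
  · intro x; rfl
  · intro x y; rw [mul_comm]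
  · intro x y z; rw [mul_assoc]
  · decide

set_option maxHeartbeats 2000000 in
theorem stmt16 :
    letI : StarRing (ZMod 4) := starRingOfComm
    letI : StarRing (CD (ZMod 4) 1) :=
      CD.starRing (fun t => by rw [one_mul, mul_one]) rfl
    letI : StarRing (CD (CD (ZMod 4) 1) 1) :=
      CD.starRing (fun t => by rw [one_mul, mul_one]) (by ext <;> simp)
    (Finite (CD (CD (CD (ZMod 4) 1) 1) 1) ∧
      IsCentrallyEssential (CD (CD (CD (ZMod 4) 1) 1) 1) ∧
      (¬ ∀ x y : CD (CD (CD (ZMod 4) 1) 1) 1, x * y = y * x) ∧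
      ¬ ∀ x y z : CD (CD (CD (ZMod 4) 1) 1) 1, x * y * z = x * (y * z)) := by
  letI : StarRing (ZMod 4) := starRingOfComm
  letI : StarRing (CD (ZMod 4) 1) :=
    CD.starRing (fun t => by rw [one_mul, mul_one]) rfl
  letI : StarRing (CD (CD (ZMod 4) 1) 1) :=
    CD.starRing (fun t => by rw [one_mul, mul_one]) (by ext <;> simp)
  have g1 := zmod4Good.cd
  have g2 := g1.cd
  have g3 := g2.cd
  obtain ⟨gfour, gst, gcomm, gassoc, ghalf⟩ := g3
  have twoCentral : ∀ x : CD (CD (CD (ZMod 4) 1) 1) 1,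
      x + x ∈ ringCenter (CD (CD (CD (ZMod 4) 1) 1) 1) := by
    intro x
    constructor
    · intro a b
      refine ⟨?_, ?_, ?_⟩ <;> unfold naAssociator <;> rw [sub_eq_zero] <;>
        simp only [mul_add, add_mul]
      · exact gassoc x a b
      · exact gassoc a x b
      · exact gassoc a b x
    · intro a
      unfold naCommutator
      rw [sub_eq_zero]
      simp only [mul_add, add_mul]
      exact gcomm x a
  have oneCentral : (1 : CD (CD (CD (ZMod 4) 1) 1) 1) ∈ ringCenter (CD (CD (CD (ZMod 4) 1) 1) 1) :=
    ⟨fun a b => ⟨by simp [naAssociator], by simp [naAssociator], by simp [naAssociator]⟩,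
      fun a => by simp [naCommutator]⟩
  refine ⟨inferInstance, ?_, ?_, ?_⟩
  · intro r hr
    by_cases h2 : r + r = 0
    · obtain ⟨s, hs⟩ := ghalf r h2
      exact ⟨1, oneCentral, by rwa [one_mul], by rw [one_mul, ← hs]; exact twoCentral s⟩
    · refine ⟨1 + 1, twoCentral 1, ?_, ?_⟩
      · rwa [add_mul, one_mul]
      · rw [add_mul, one_mul]; exact twoCentral r
  · intro h
    have := congrArg (fun t : CD (CD (CD (ZMod 4) 1) 1) 1 => t.im.im.re)
      (h ⟨0, 1⟩ ⟨⟨0, 1⟩, 0⟩)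
    simp at this
    exact absurd this (by decide)
  · intro h
    have := congrArg (fun t : CD (CD (CD (ZMod 4) 1) 1) 1 => t.im.im.im)
      (h ⟨⟨0, 1⟩, 0⟩ ⟨⟨⟨0, 1⟩, 0⟩, 0⟩ ⟨0, 1⟩)
    simp at this
    exact absurd this (by decide)
end

section
/- There exists a finite unital ring R that is non-commutative, not alternative (i.e., it fails one of the identities (a,a,b) = 0, (a,b,b) = 0), and centrally essential. -/
set_option linter.unusedSectionVars false

/-!
Over a commutative ring `k`, take the algebra with basis `1, x, y, xy, x(xy), y(xy)` whose only
nonzero products of non-unit basis elements are `x * y = xy`, `x * xy = xy * x = x(xy)` and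
`y * xy = xy * y = y(xy)`. There `x * y = xy ≠ 0 = y * x` and `(x, y, y) = (xy)y = y(xy) ≠ 0`.
Every element with vanishing `x`- and `y`-coordinates is central, so such an `r ≠ 0` is its own
witness with `z = 1`; for any other `r`, `z = xy` works, since `xy * r` carries the `x`- and
`y`-coordinates of `r` into the central coordinates `x(xy)` and `y(xy)`.
-/

@[ext]
structure Alg6 (k : Type*) where
  scal : k
  x : k
  y : k
  xy : k
  xxy : k
  yxy : k

namespace Alg6

instance {k : Type*} [Finite k] : Finite (Alg6 k) :=
  Finite.of_injective (fun p : Alg6 k => (p.scal, p.x, p.y, p.xy, p.xxy, p.yxy))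
    (fun p q h => by cases p; cases q; simpa using h)

variable {k : Type*} [CommRing k]

instance : Zero (Alg6 k) := ⟨⟨0, 0, 0, 0, 0, 0⟩⟩
instance : One (Alg6 k) := ⟨⟨1, 0, 0, 0, 0, 0⟩⟩
instance : Add (Alg6 k) :=
  ⟨fun p q => ⟨p.scal + q.scal, p.x + q.x, p.y + q.y, p.xy + q.xy, p.xxy + q.xxy, p.yxy + q.yxy⟩⟩
instance : Neg (Alg6 k) := ⟨fun p => ⟨-p.scal, -p.x, -p.y, -p.xy, -p.xxy, -p.yxy⟩⟩
instance : Mul (Alg6 k) := ⟨fun p q =>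
  ⟨p.scal * q.scal,
   p.scal * q.x + p.x * q.scal,
   p.scal * q.y + p.y * q.scal,
   p.scal * q.xy + p.xy * q.scal + p.x * q.y,
   p.scal * q.xxy + p.xxy * q.scal + p.x * q.xy + p.xy * q.x,
   p.scal * q.yxy + p.yxy * q.scal + p.y * q.xy + p.xy * q.y⟩⟩

theorem zero_def : (0 : Alg6 k) = ⟨0, 0, 0, 0, 0, 0⟩ := rfl
theorem one_def : (1 : Alg6 k) = ⟨1, 0, 0, 0, 0, 0⟩ := rfl
theorem add_def (p q : Alg6 k) :
    p + q = ⟨p.scal + q.scal, p.x + q.x, p.y + q.y, p.xy + q.xy, p.xxy + q.xxy, p.yxy + q.yxy⟩ :=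
  rfl
theorem neg_def (p : Alg6 k) : -p = ⟨-p.scal, -p.x, -p.y, -p.xy, -p.xxy, -p.yxy⟩ := rfl
theorem mul_def (p q : Alg6 k) : p * q =
    ⟨p.scal * q.scal,
     p.scal * q.x + p.x * q.scal,
     p.scal * q.y + p.y * q.scal,
     p.scal * q.xy + p.xy * q.scal + p.x * q.y,
     p.scal * q.xxy + p.xxy * q.scal + p.x * q.xy + p.xy * q.x,
     p.scal * q.yxy + p.yxy * q.scal + p.y * q.xy + p.xy * q.y⟩ := rfl

instance : NonAssocRing (Alg6 k) where
  add_assoc p q r := by ext <;> simp only [add_def] <;> ring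
  zero_add p := by ext <;> simp only [add_def, zero_def] <;> ring
  add_zero p := by ext <;> simp only [add_def, zero_def] <;> ring
  add_comm p q := by ext <;> simp only [add_def] <;> ring
  neg_add_cancel p := by ext <;> simp only [add_def, neg_def, zero_def] <;> ring
  nsmul := nsmulRec
  zsmul := zsmulRec
  left_distrib p q r := by ext <;> simp only [add_def, mul_def] <;> ring
  right_distrib p q r := by ext <;> simp only [add_def, mul_def] <;> ring
  zero_mul p := by ext <;> simp only [mul_def, zero_def] <;> ring
  mul_zero p := by ext <;> simp only [mul_def, zero_def] <;> ring
  one_mul p := by ext <;> simp only [mul_def, one_def] <;> ring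
  mul_one p := by ext <;> simp only [mul_def, one_def] <;> ring

theorem sub_def (p q : Alg6 k) :
    p - q = ⟨p.scal - q.scal, p.x - q.x, p.y - q.y, p.xy - q.xy, p.xxy - q.xxy, p.yxy - q.yxy⟩ := by
  simp only [sub_eq_add_neg, add_def, neg_def]

def X : Alg6 k := ⟨0, 1, 0, 0, 0, 0⟩
def Y : Alg6 k := ⟨0, 0, 1, 0, 0, 0⟩
def XY : Alg6 k := ⟨0, 0, 0, 1, 0, 0⟩

theorem mul_X_Y_ne [Nontrivial k] : (X : Alg6 k) * Y ≠ Y * X := by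
  intro h
  simpa [X, Y, mul_def] using congrArg xy h

theorem naAssociator_X_Y_Y_ne [Nontrivial k] : naAssociator (X : Alg6 k) Y Y ≠ 0 := by
  intro h
  simpa [naAssociator, X, Y, mul_def, sub_def, zero_def] using congrArg yxy h

theorem mem_ringCenter {z : Alg6 k} (hx : z.x = 0) (hy : z.y = 0) : z ∈ ringCenter (Alg6 k) := by
  refine ⟨fun a b => ⟨?_, ?_, ?_⟩, fun a => ?_⟩ <;>
    ext <;> simp only [naAssociator, naCommutator, mul_def, sub_def, zero_def, hx, hy] <;> ring

theorem XY_mul (r : Alg6 k) : XY * r = ⟨0, 0, 0, r.scal, r.x, r.y⟩ := by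
  ext <;> simp [XY, mul_def]

theorem isCentrallyEssential : IsCentrallyEssential (Alg6 k) := by
  intro r hr
  by_cases hxy : r.x = 0 ∧ r.y = 0
  · exact ⟨1, mem_ringCenter rfl rfl, by rwa [one_mul],
      by rw [one_mul]; exact mem_ringCenter hxy.1 hxy.2⟩
  · refine ⟨XY, mem_ringCenter rfl rfl, ?_, by rw [XY_mul]; exact mem_ringCenter rfl rfl⟩
    rw [XY_mul]
    intro h
    exact hxy ⟨congrArg xxy h, congrArg yxy h⟩

end Alg6

theorem stmt18 :
    ∃ (R : Type) (_ : NonAssocRing R), Finite R ∧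
      (¬ ∀ a b : R, a * b = b * a) ∧
      (¬ ∀ a b : R, naAssociator a a b = 0 ∧ naAssociator a b b = 0) ∧
      IsCentrallyEssential R :=
  ⟨Alg6 (ZMod 2), inferInstance, inferInstance, fun h => Alg6.mul_X_Y_ne (h _ _),
    fun h => Alg6.naAssociator_X_Y_Y_ne (h _ _).2, Alg6.isCentrallyEssential⟩
end
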